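/- Let f be an n-bit partial Boolean function and let G_b be the two-party index gadget with b = O(log n). Then R^cc(f ∘ G_b) = Ω( R₀^cc(f_usab ∘ G'_b) / (log n · log log n) ), where G'_b is the index gadget with Bob's alphabet {0,1,*,†}. -/

import Mathlib

/-! ### Decision trees -/

/-- A deterministic decision tree querying positions of type `ι`, receiving answers
in `α`, and producing an output in `β`. -/
inductive DTree (ι α β : Type) : Type
  | leaf (b : β) : DTree ι α β
  | node (i : ι) (next : α → DTree ι α β) : DTree ι α β

namespace DTree

variable {ι α β : Type}

/-- The output of a decision tree on input `x`. -/
def output : DTree ι α β → (ι → α) → β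
  | leaf b, _ => b
  | node i next, x => (next (x i)).output x

/-- The number of queries made by a decision tree on input `x`. -/
def cost : DTree ι α β → (ι → α) → ℕ
  | leaf _, _ => 0
  | node i next, x => (next (x i)).cost x + 1

/-- The set of positions queried by a decision tree on input `x`. -/
def queries : DTree ι α β → (ι → α) → Set ι
  | leaf _, _ => ∅
  | node i next, x => insert i ((next (x i)).queries x)

end DTree

/-- A partial function on inputs `ι → α` with outputs in `β`; `none` means undefined
(the domain is the set of inputs mapped to `some` value). -/
abbrev PFn (ι α β : Type) := (ι → α) → Option β

/-- `t` computes the partial function `f` (correct on every input of the domain). -/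
def DTree.computesP {ι α β : Type} (t : DTree ι α β) (f : PFn ι α β) : Prop :=
  ∀ x b, f x = some b → t.output x = b

/-- Deterministic query complexity `D(f)`. -/
noncomputable def Dq {ι α β : Type} (f : PFn ι α β) : ℝ :=
  sInf {T : ℝ | 0 ≤ T ∧ ∃ t : DTree ι α β, t.computesP f ∧ ∀ x, (t.cost x : ℝ) ≤ T}

/-! ### Randomized query algorithms -/

/-- A randomized query algorithm: a finitely supported probability distribution over
deterministic decision trees. -/
structure RandAlg (ι α β : Type) where
  Ω : Type
  [fin : Fintype Ω]
  p : Ω → ℝ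
  nonneg : ∀ ω, 0 ≤ p ω
  sum_one : ∑ ω, p ω = 1
  tree : Ω → DTree ι α β

namespace RandAlg

variable {ι α β : Type}

/-- Expected number of queries of `A` on input `x`. -/
noncomputable def expCost (A : RandAlg ι α β) (x : ι → α) : ℝ :=
  letI := A.fin
  ∑ ω, A.p ω * ((A.tree ω).cost x : ℝ)

open Classical in
/-- Probability that `A` outputs `b` on input `x`. -/
noncomputable def succProb (A : RandAlg ι α β) (x : ι → α) (b : β) : ℝ :=
  letI := A.fin
  ∑ ω, if (A.tree ω).output x = b then A.p ω else 0

/-- `A` computes `f` with error at most `ε`: on every input of the domain the correct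
output is produced with probability at least `1 - ε`. -/
def Computes (A : RandAlg ι α β) (f : PFn ι α β) (ε : ℝ) : Prop :=
  ∀ x b, f x = some b → 1 - ε ≤ A.succProb x b

/-- The worst-case cost of `A` (over all inputs and all trees in the support) is at most `T`. -/
def WCostLe (A : RandAlg ι α β) (T : ℝ) : Prop :=
  ∀ ω, A.p ω ≠ 0 → ∀ x, ((A.tree ω).cost x : ℝ) ≤ T

/-- The expected cost of `A` on every input of the domain of `f` is at most `T`. -/
def ECostLe (A : RandAlg ι α β) (f : PFn ι α β) (T : ℝ) : Prop :=
  ∀ x, (f x).isSome → A.expCost x ≤ T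

end RandAlg

/-- `R_ε(f)`: minimum worst-case cost of an `ε`-error randomized algorithm for `f`. -/
noncomputable def Rw {ι α β : Type} (ε : ℝ) (f : PFn ι α β) : ℝ :=
  sInf {T : ℝ | 0 ≤ T ∧ ∃ A : RandAlg ι α β, A.Computes f ε ∧ A.WCostLe T}

/-- `R̄_ε(f)`: minimum expected cost of an `ε`-error randomized algorithm for `f`. -/
noncomputable def Rbar {ι α β : Type} (ε : ℝ) (f : PFn ι α β) : ℝ :=
  sInf {T : ℝ | 0 ≤ T ∧ ∃ A : RandAlg ι α β, A.Computes f ε ∧ A.ECostLe f T}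

/-- `R₀(f)`: zero-error expected randomized query complexity. -/
noncomputable def R0 {ι α β : Type} (f : PFn ι α β) : ℝ := Rbar 0 f

/-- `R(f) := R_{1/3}(f)`: bounded-error randomized query complexity. -/
noncomputable def Rb {ι α β : Type} (f : PFn ι α β) : ℝ := Rw (1/3) f

/-- The total function `f` viewed as a partial function. -/
def tot {ι α β : Type} (f : (ι → α) → β) : PFn ι α β := fun x => some (f x)


/-! ### Sabotage complexity and composition -/

/-- The four-letter alphabet `{0, 1, *, †}` of sabotaged inputs. -/
inductive Sab : Type
  | zero : Sab
  | one : Sab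
  | star : Sab
  | dagger : Sab
deriving DecidableEq

/-- Embedding of Boolean values into the sabotage alphabet. -/
def Sab.ofBool : Bool → Sab
  | false => Sab.zero
  | true => Sab.one

/-- `p` is consistent with the Boolean input `x`: wherever `p` has a Boolean entry,
it agrees with `x`. -/
def SabConsistent {ι : Type} (p : ι → Sab) (x : ι → Bool) : Prop :=
  ∀ i, p i = Sab.ofBool (x i) ∨ p i = Sab.star ∨ p i = Sab.dagger

/-- `p` is a sabotaged input for `f` using the sabotage symbol `s`: all entries of `p`
lie in `{0, 1, s}` and `p` is consistent with both a `0`-input and a `1`-input of `f`. -/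
def IsSabotaged {ι : Type} (f : PFn ι Bool Bool) (s : Sab) (p : ι → Sab) : Prop :=
  (∀ i, p i = Sab.zero ∨ p i = Sab.one ∨ p i = s) ∧
  ∃ x y, (f x).isSome ∧ (f y).isSome ∧ f x ≠ f y ∧ SabConsistent p x ∧ SabConsistent p y

open Classical in
/-- The sabotage problem `f_sab` associated with `f`: it is `0` on `P_f` (inputs
sabotaged with `*`) and `1` on `P_f†` (inputs sabotaged with `†`). -/
noncomputable def fsab {ι : Type} (f : PFn ι Bool Bool) : PFn ι Sab Bool :=
  fun p =>
    if IsSabotaged f Sab.star p then some false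
    else if IsSabotaged f Sab.dagger p then some true
    else none

open Classical in
/-- `f_usab`: the restriction of `f_sab` to inputs having exactly one `*` or `†` entry. -/
noncomputable def fusab {ι : Type} (f : PFn ι Bool Bool) : PFn ι Sab Bool :=
  fun p =>
    if ∃! i, p i = Sab.star ∨ p i = Sab.dagger then fsab f p else none

/-- Randomized sabotage complexity `RS(f) := R₀(f_sab)`. -/
noncomputable def RS {ι : Type} (f : PFn ι Bool Bool) : ℝ := R0 (fsab f)

/-- `RS_u(f) := R₀(f_usab)` (this is `0` automatically when `f_usab` has empty domain). -/
noncomputable def RSu {ι : Type} (f : PFn ι Bool Bool) : ℝ := R0 (fusab f)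

open Classical in
/-- Composition `f ∘ g` of partial functions: defined on an input exactly when every
inner copy of `g` is defined and the tuple of inner values lies in the domain of `f`. -/
noncomputable def pcomp {κ ι α β γ : Type} (f : PFn κ β γ) (g : PFn ι α β) :
    PFn (κ × ι) α γ :=
  fun x =>
    if h : ∀ i : κ, (g fun j => x (i, j)).isSome then
      f fun i => (g fun j => x (i, j)).get (h i)
    else none

/-- Index types for iterated self-composition. -/
def IterIdx (κ : Type) : ℕ → Type
  | 0 => κ
  | n + 1 => κ × IterIdx κ n

/-- `iterComp f n` is `f` composed with itself `n + 1` times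
(`iterComp f 0 = f`, `iterComp f (n+1) = f ∘ iterComp f n`). -/
noncomputable def iterComp {κ : Type} (f : PFn κ Bool Bool) : (n : ℕ) → PFn (IterIdx κ n) Bool Bool
  | 0 => f
  | n + 1 => pcomp f (iterComp f n)

/-! ### The index function -/

/-- The value of a bit-string read as a binary number (bit `i` has weight `2^i`). -/
def binval {b : ℕ} (x : Fin b → Bool) : ℕ := ∑ i, if x i then 2 ^ (i : ℕ) else 0

theorem sum_range_two_pow (b : ℕ) : ∑ i ∈ Finset.range b, 2 ^ i = 2 ^ b - 1 := by
  induction b with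
  | zero => simp
  | succ n ih =>
    rw [Finset.sum_range_succ, ih, pow_succ]
    have : 1 ≤ 2 ^ n := Nat.one_le_two_pow
    omega

theorem binval_lt {b : ℕ} (x : Fin b → Bool) : binval x < 2 ^ b := by
  have h1 : binval x ≤ ∑ i : Fin b, 2 ^ (i : ℕ) := by
    refine Finset.sum_le_sum fun i _ => ?_
    split <;> simp
  have h2 : ∑ i : Fin b, 2 ^ (i : ℕ) = 2 ^ b - 1 := by
    rw [Fin.sum_univ_eq_sum_range (fun i => 2 ^ i) b]
    exact sum_range_two_pow b
  have h3 : 0 < 2 ^ b := Nat.pow_pos (by norm_num)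
  omega

/-- The largest `c` with `c + 2^c ≤ m`. -/
def indexC (m : ℕ) : ℕ := Nat.findGreatest (fun c => c + 2 ^ c ≤ m) m

/-- The index function `Ind_m : {0,1}^m → {0,1}`: the first `c` bits (where `c` is the
largest integer with `c + 2^c ≤ m`) are read as a binary address `y` into the next
`2^c` bits, and the output is the addressed bit. -/
def IndFn (m : ℕ) : PFn (Fin m) Bool Bool :=
  fun x =>
    let c := indexC m
    let y := ∑ i : Fin m, if (i : ℕ) < c ∧ x i = true then 2 ^ (i : ℕ) else 0
    if h : c + y < m then some (x ⟨c + y, h⟩) else none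

/-- `f^{⊕c}_ind`: the index function on `c + 2^c` bits with `f` composed into each of
the `c` address bits only. -/
def findex {n : ℕ} (f : PFn (Fin n) Bool Bool) (c : ℕ) :
    PFn ((Fin c × Fin n) ⊕ Fin (2 ^ c)) Bool Bool :=
  fun x =>
    if h : ∀ i : Fin c, (f fun j => x (Sum.inl (i, j))).isSome then
      some (x (Sum.inr ⟨binval fun i => (f fun j => x (Sum.inl (i, j))).get (h i),
        binval_lt _⟩))
    else none

/-! ### Communication complexity -/

/-- A deterministic two-party communication protocol: at each internal node, one of
the players sends one bit computed from their own input. -/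
inductive Prot (X Y Z : Type) : Type
  | leaf (z : Z) : Prot X Y Z
  | anode (msg : X → Bool) (next : Bool → Prot X Y Z) : Prot X Y Z
  | bnode (msg : Y → Bool) (next : Bool → Prot X Y Z) : Prot X Y Z

namespace Prot

variable {X Y Z : Type}

/-- The output of a protocol on the input pair `(x, y)`. -/
def run : Prot X Y Z → X → Y → Z
  | leaf z, _, _ => z
  | anode msg next, x, y => (next (msg x)).run x y
  | bnode msg next, x, y => (next (msg y)).run x y

/-- The number of bits communicated by a protocol on the input pair `(x, y)`. -/
def cost : Prot X Y Z → X → Y → ℕ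
  | leaf _, _, _ => 0
  | anode msg next, x, y => (next (msg x)).cost x y + 1
  | bnode msg next, x, y => (next (msg y)).cost x y + 1

end Prot

/-- A (possibly partial) two-party communication problem. -/
abbrev CFn (X Y Z : Type) := X → Y → Option Z

/-- A randomized communication protocol: a finitely supported probability
distribution over deterministic protocols. -/
structure RandProt (X Y Z : Type) where
  Ω : Type
  [fin : Fintype Ω]
  p : Ω → ℝ
  nonneg : ∀ ω, 0 ≤ p ω
  sum_one : ∑ ω, p ω = 1
  prot : Ω → Prot X Y Z

namespace RandProt

variable {X Y Z : Type}

/-- Expected communication of `P` on the input pair `(x, y)`. -/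
noncomputable def expCost (P : RandProt X Y Z) (x : X) (y : Y) : ℝ :=
  letI := P.fin
  ∑ ω, P.p ω * ((P.prot ω).cost x y : ℝ)

open Classical in
/-- Probability that `P` outputs `z` on the input pair `(x, y)`. -/
noncomputable def succProb (P : RandProt X Y Z) (x : X) (y : Y) (z : Z) : ℝ :=
  letI := P.fin
  ∑ ω, if (P.prot ω).run x y = z then P.p ω else 0

/-- `P` computes `F` with error at most `ε` on every input of the domain. -/
def Computes (P : RandProt X Y Z) (F : CFn X Y Z) (ε : ℝ) : Prop :=
  ∀ x y z, F x y = some z → 1 - ε ≤ P.succProb x y z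

/-- The worst-case communication of `P` is at most `T`. -/
def WCostLe (P : RandProt X Y Z) (T : ℝ) : Prop :=
  ∀ ω, P.p ω ≠ 0 → ∀ x y, ((P.prot ω).cost x y : ℝ) ≤ T

/-- The expected communication of `P` on every domain input is at most `T`. -/
def ECostLe (P : RandProt X Y Z) (F : CFn X Y Z) (T : ℝ) : Prop :=
  ∀ x y, (F x y).isSome → P.expCost x y ≤ T

end RandProt

/-- `R^cc(F)`: bounded-error (error `1/3`) randomized communication complexity. -/
noncomputable def Rcc {X Y Z : Type} (F : CFn X Y Z) : ℝ :=
  sInf {T : ℝ | 0 ≤ T ∧ ∃ P : RandProt X Y Z, P.Computes F (1/3) ∧ P.WCostLe T}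

/-- `R₀^cc(F)`: zero-error expected randomized communication complexity. -/
noncomputable def R0cc {X Y Z : Type} (F : CFn X Y Z) : ℝ :=
  sInf {T : ℝ | 0 ≤ T ∧ ∃ P : RandProt X Y Z, P.Computes F 0 ∧ P.ECostLe F T}

/-- The lifted communication problem `f ∘ G`: Alice gets `(x₁, …, xₙ)`, Bob gets
`(y₁, …, yₙ)`, and they must compute `f(G(x₁,y₁), …, G(xₙ,yₙ))`. -/
def gcomp {n : ℕ} {X Y σ β : Type} (f : PFn (Fin n) σ β) (G : X → Y → σ) :
    CFn (Fin n → X) (Fin n → Y) β :=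
  fun xs ys => f fun i => G (xs i) (ys i)

/-- The two-party index gadget on pointers of `b` bits, with array alphabet `σ`:
Alice holds a `b`-bit pointer, Bob holds an array of `2^b` symbols, and the gadget
evaluates to the symbol of Bob's array addressed by Alice's pointer. -/
def IndG (b : ℕ) (σ : Type) : (Fin b → Bool) → (Fin (2 ^ b) → σ) → σ :=
  fun x y => y ⟨binval x, binval_lt x⟩


/-! Let `P` be a bounded-error protocol of cost `T` for `f ∘ G_b`. On an input of `f_usab ∘ G'_b`
the gadgets produce a sabotaged input `p` with a single special position `i₀`, and `f` takes the
value `z₀ xor c i₀` on the filling of `p` that reads position `i` as `c i`. Bob can fill the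
special symbols in his arrays himself, so running `P` on the filling reading position `i` as bit
`j` of `i`, and on the all-zero filling, reveals bit `j` of `i₀`. With `⌈log₂ n⌉ + 1` such probes,
each amplified by a majority vote of `O(log log n)` runs, `i₀` is found with probability at least
`1/2`. Alice then sends her pointer at the candidate position and Bob looks for a special symbol
there, which, if found, certifies the answer. Restarting on failure, and falling back to Alice
revealing her whole input after `n b + 1` failures, gives a zero-error protocol of expected cost
`O(T log n log log n + b)`; and `T ≥ 1` unless `f_usab ∘ G'_b` is trivial. -/

open Finset

section Distribution

variable {β ι : Type*} [Fintype β] [Fintype ι] [DecidableEq ι]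

structure IsDistrib (w : β → ℝ) : Prop where
  nonneg : ∀ a, 0 ≤ w a
  sum_eq_one : ∑ a, w a = 1

def piWeight (w : β → ℝ) (τ : ι → β) : ℝ := ∏ i, w (τ i)

open Classical in
noncomputable def wprob (w : β → ℝ) (E : β → Prop) : ℝ := ∑ a, if E a then w a else 0

theorem wprob_eq_sum_mul_indicator (w : β → ℝ) (E : β → Prop) [DecidablePred E] :
    wprob w E = ∑ a, w a * if E a then 1 else 0 := by
  refine sum_congr rfl fun a _ => ?_
  split_ifs <;> simp

theorem sum_piWeight_mul_prod (w : β → ℝ) (g : ι → β → ℝ) :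
    ∑ τ : ι → β, piWeight w τ * ∏ i, g i (τ i) = ∏ i, ∑ a, w a * g i a := by
  simp only [piWeight, ← prod_mul_distrib]
  exact (Fintype.prod_sum fun i a => w a * g i a).symm

theorem sum_piWeight_succ {m : ℕ} (w : β → ℝ) (F : (Fin (m + 1) → β) → ℝ) :
    ∑ τ, piWeight w τ * F τ = ∑ a, w a * ∑ τ : Fin m → β, piWeight w τ * F (Fin.cons a τ) := by
  rw [← (Fin.consEquiv fun _ => β).sum_comp, Fintype.sum_prod_type]
  simp [Fin.consEquiv, piWeight, Fin.prod_univ_succ, mul_sum, mul_assoc]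

namespace IsDistrib

variable {w : β → ℝ}

theorem wprob_nonneg (hw : IsDistrib w) (E : β → Prop) : 0 ≤ wprob w E :=
  sum_nonneg fun a _ => by split_ifs <;> simp [hw.nonneg a]

theorem wprob_mono (hw : IsDistrib w) {E E' : β → Prop} (h : ∀ a, E a → E' a) :
    wprob w E ≤ wprob w E' := by
  classical
  refine sum_le_sum fun a _ => ?_
  by_cases ha : E a
  · simp [ha, h a ha]
  · simp only [ha, if_false]
    split_ifs <;> simp [hw.nonneg a]

theorem pi (hw : IsDistrib w) : IsDistrib (piWeight w : (ι → β) → ℝ) where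
  nonneg τ := prod_nonneg fun i _ => hw.nonneg _
  sum_eq_one := by simpa [hw.sum_eq_one] using sum_piWeight_mul_prod (ι := ι) w fun _ _ => 1

theorem wprob_piWeight_apply (hw : IsDistrib w) (E : β → Prop) (q : ι) :
    wprob (piWeight w) (fun τ : ι → β => E (τ q)) = wprob w E := by
  classical
  have := sum_piWeight_mul_prod w fun i a => if i = q then (if E a then 1 else 0) else 1
  simp only [prod_ite_eq', mem_univ, if_true] at this
  rw [wprob_eq_sum_mul_indicator, wprob_eq_sum_mul_indicator, this,
    Fintype.prod_eq_single q fun i hi => by simp [hi, hw.sum_eq_one]]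
  simp

theorem wprob_exists_le (hw : IsDistrib w) (E : ι → β → Prop) :
    wprob (piWeight w) (fun τ : ι → β => ∃ i, E i (τ i)) ≤ ∑ i, wprob w (E i) := by
  classical
  have hτ := (hw.pi (ι := ι)).nonneg
  calc wprob (piWeight w) (fun τ : ι → β => ∃ i, E i (τ i))
      ≤ ∑ i, wprob (piWeight w) (fun τ : ι → β => E i (τ i)) := ?_
    _ = ∑ i, wprob w (E i) := by simp only [hw.wprob_piWeight_apply]
  unfold wprob
  rw [sum_comm]
  refine sum_le_sum fun τ _ => ?_
  split_ifs with h
  · obtain ⟨i, hi⟩ := h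
    calc piWeight w τ = if E i (τ i) then piWeight w τ else 0 := by rw [if_pos hi]
      _ ≤ _ := single_le_sum (f := fun j => if E j (τ j) then piWeight w τ else 0)
          (fun j _ => by split_ifs <;> simp [hτ τ]) (mem_univ i)
  · exact sum_nonneg fun j _ => by split_ifs <;> simp [hτ τ]

theorem wprob_le_card_filter (hw : IsDistrib w) (E : β → Prop) [DecidablePred E]
    (r : ℕ) :
    wprob (piWeight w) (fun τ : ι → β => r ≤ #{i | E (τ i)}) ≤
      (1 + wprob w E) ^ Fintype.card ι / 2 ^ r := by
  have hpow : ∀ τ : ι → β, (∏ i, if E (τ i) then (2 : ℝ) else 1) = 2 ^ #{i | E (τ i)} := by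
    intro τ
    rw [prod_ite, prod_const, prod_const_one, mul_one]
  have hmass : ∑ a, w a * (if E a then 2 else 1) = 1 + wprob w E := by
    conv_rhs => rw [← hw.sum_eq_one, wprob, ← sum_add_distrib]
    refine sum_congr rfl fun a _ => ?_
    split_ifs <;> ring
  calc wprob (piWeight w) (fun τ : ι → β => r ≤ #{i | E (τ i)})
      ≤ ∑ τ : ι → β, piWeight w τ * (∏ i, if E (τ i) then 2 else 1) / 2 ^ r := by
        refine sum_le_sum fun τ _ => ?_
        have := hw.pi.nonneg τ
        rw [hpow, mul_div_assoc]
        split_ifs with h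
        · exact le_mul_of_one_le_right this
            ((one_le_div (by positivity)).2 (pow_le_pow_right₀ one_le_two h))
        · positivity
    _ = (1 + wprob w E) ^ Fintype.card ι / 2 ^ r := by
        rw [← sum_div, sum_piWeight_mul_prod w fun _ a => if E a then 2 else 1, hmass,
          prod_const, card_univ]

theorem sum_piWeight_mul_le_of_restart (hw : IsDistrib w) {fail : β → Prop}
    [DecidablePred fail] {ε : ℝ} (hε : wprob w fail ≤ ε) (hε1 : ε < 1) {cost : List β → ℝ}
    (hcost : ∀ l, 0 ≤ cost l) {A B : ℝ} (hA : 0 ≤ A) (hnil : cost [] ≤ B)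
    (hcons : ∀ a, w a ≠ 0 → ∀ l, cost (a :: l) ≤ A + if fail a then cost l else 0) (M : ℕ) :
    ∑ σ : Fin M → β, piWeight w σ * cost (List.ofFn σ) ≤ A / (1 - ε) + ε ^ M * B := by
  have hε0 : 0 ≤ ε := (hw.wprob_nonneg fail).trans hε
  induction M with
  | zero =>
    have : 0 ≤ A / (1 - ε) := div_nonneg hA (by linarith)
    simp only [univ_unique, sum_singleton, piWeight, univ_eq_empty, prod_empty, one_mul,
      List.ofFn_zero, pow_zero]
    linarith
  | succ M ih =>
    set E := ∑ σ : Fin M → β, piWeight w σ * cost (List.ofFn σ)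
    have hE : 0 ≤ E := sum_nonneg fun σ _ => mul_nonneg (hw.pi.nonneg σ) (hcost _)
    have hstep : ∀ a, w a * ∑ σ : Fin M → β, piWeight w σ * cost (List.ofFn (Fin.cons a σ)) ≤
        w a * (A + if fail a then E else 0) := by
      intro a
      rcases eq_or_ne (w a) 0 with ha | ha
      · simp [ha]
      refine mul_le_mul_of_nonneg_left ?_ (hw.nonneg a)
      calc ∑ σ : Fin M → β, piWeight w σ * cost (List.ofFn (Fin.cons a σ))
          ≤ ∑ σ : Fin M → β, piWeight w σ * (A + if fail a then cost (List.ofFn σ) else 0) :=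
            sum_le_sum fun σ _ => mul_le_mul_of_nonneg_left
              (by simpa only [List.ofFn_cons] using hcons a ha _) (hw.pi.nonneg σ)
        _ = A + if fail a then E else 0 := by
            split_ifs <;> simp [mul_add, sum_add_distrib, ← sum_mul, hw.pi.sum_eq_one, E]
    calc ∑ σ, piWeight w σ * cost (List.ofFn σ)
        = ∑ a, w a * ∑ σ : Fin M → β, piWeight w σ * cost (List.ofFn (Fin.cons a σ)) :=
          sum_piWeight_succ w _
      _ ≤ ∑ a, w a * (A + if fail a then E else 0) := sum_le_sum fun a _ => hstep a
      _ = A + wprob w fail * E := by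
          rw [wprob_eq_sum_mul_indicator, sum_mul]
          simp [mul_add, sum_add_distrib, ← sum_mul, hw.sum_eq_one, mul_ite]
      _ ≤ A + ε * (A / (1 - ε) + ε ^ M * B) := by gcongr
      _ = A / (1 - ε) + ε ^ (M + 1) * B := by
          field_simp [show 1 - ε ≠ 0 by linarith]
          ring

end IsDistrib

end Distribution

def majority {k : ℕ} (v : Fin k → Bool) : Bool := decide (k < 2 * #{i | v i = true})

theorem le_card_ne_of_majority_ne {r : ℕ} {v : Fin (2 * r) → Bool} {z : Bool}
    (h : majority v ≠ z) : r ≤ #{i | v i ≠ z} := by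
  have hsplit := card_filter_add_card_filter_not (s := univ) fun i => v i = true
  simp only [card_univ, Fintype.card_fin, Bool.not_eq_true] at hsplit
  cases z <;> simp [majority] at h ⊢ <;> omega

namespace Prot

variable {X Y Y' Z W : Type}

def bind : Prot X Y Z → (Z → Prot X Y W) → Prot X Y W
  | leaf z, g => g z
  | anode msg next, g => anode msg fun c => (next c).bind g
  | bnode msg next, g => bnode msg fun c => (next c).bind g

@[simp] theorem run_bind (t : Prot X Y Z) (g : Z → Prot X Y W) (x : X) (y : Y) :
    (t.bind g).run x y = (g (t.run x y)).run x y := by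
  induction t with
  | leaf z => rfl
  | anode msg next ih => simp [bind, run, ih]
  | bnode msg next ih => simp [bind, run, ih]

@[simp] theorem cost_bind (t : Prot X Y Z) (g : Z → Prot X Y W) (x : X) (y : Y) :
    (t.bind g).cost x y = t.cost x y + (g (t.run x y)).cost x y := by
  induction t with
  | leaf z => simp [bind, run, cost]
  | anode msg next ih => simp [bind, run, cost, ih]; omega
  | bnode msg next ih => simp [bind, run, cost, ih]; omega

def comapY (g : Y' → Y) : Prot X Y Z → Prot X Y' Z
  | leaf z => leaf z
  | anode msg next => anode msg fun c => (next c).comapY g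
  | bnode msg next => bnode (msg ∘ g) fun c => (next c).comapY g

@[simp] theorem run_comapY (g : Y' → Y) (t : Prot X Y Z) (x : X) (y : Y') :
    (t.comapY g).run x y = t.run x (g y) := by
  induction t with
  | leaf z => rfl
  | anode msg next ih => simp [comapY, run, ih]
  | bnode msg next ih => simp [comapY, run, ih]

@[simp] theorem cost_comapY (g : Y' → Y) (t : Prot X Y Z) (x : X) (y : Y') :
    (t.comapY g).cost x y = t.cost x (g y) := by
  induction t with
  | leaf z => rfl
  | anode msg next ih => simp [comapY, cost, ih]
  | bnode msg next ih => simp [comapY, cost, ih]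

def pi : {k : ℕ} → (Fin k → Prot X Y Z) → Prot X Y (Fin k → Z)
  | 0, _ => leaf finZeroElim
  | _ + 1, t => (t 0).bind fun z => (pi fun i => t i.succ).bind fun zs => leaf (Fin.cons z zs)

@[simp] theorem run_pi {k : ℕ} (t : Fin k → Prot X Y Z) (x : X) (y : Y) :
    (pi t).run x y = fun i => (t i).run x y := by
  induction k with
  | zero => funext i; exact i.elim0
  | succ k ih =>
    funext i
    refine Fin.cases ?_ (fun j => ?_) i <;> simp [pi, run, ih]

@[simp] theorem cost_pi {k : ℕ} (t : Fin k → Prot X Y Z) (x : X) (y : Y) :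
    (pi t).cost x y = ∑ i, (t i).cost x y := by
  induction k with
  | zero => rfl
  | succ k ih => simp [pi, cost, ih, Fin.sum_univ_succ]

def sendA {d : ℕ} (v : X → Fin d → Bool) : Prot X Y (Fin d → Bool) :=
  pi fun j => anode (fun x => v x j) leaf

@[simp] theorem run_sendA {d : ℕ} (v : X → Fin d → Bool) (x : X) (y : Y) :
    (sendA v).run x y = v x := by
  simp [sendA, run]

@[simp] theorem cost_sendA {d : ℕ} (v : X → Fin d → Bool) (x : X) (y : Y) :
    (sendA v).cost x y = d := by
  simp [sendA, cost]

def sendB (v : Y → Bool) : Prot X Y Bool := bnode v leaf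

@[simp] theorem run_sendB (v : Y → Bool) (x : X) (y : Y) : (sendB v).run x y = v y := rfl

@[simp] theorem cost_sendB (v : Y → Bool) (x : X) (y : Y) : (sendB v).cost x y = 1 := rfl

theorem run_eq_run_of_cost_eq_zero {t : Prot X Y Z} {x : X} {y : Y} (h : t.cost x y = 0)
    (x' : X) (y' : Y) : t.run x y = t.run x' y' := by
  cases t <;> simp_all [cost, run]

end Prot

attribute [local instance] RandProt.fin

namespace RandProt

variable {X Y Z : Type}

theorem isDistrib (P : RandProt X Y Z) : IsDistrib P.p := ⟨P.nonneg, P.sum_one⟩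

def pure (t : Prot X Y Z) : RandProt X Y Z where
  Ω := Unit
  p _ := 1
  nonneg _ := zero_le_one
  sum_one := by simp
  prot _ := t

theorem succProb_pure {t : Prot X Y Z} {x : X} {y : Y} {z : Z} (h : t.run x y = z) :
    (pure t).succProb x y z = 1 := by
  simp [succProb, pure, h]
  rfl

/-- Below one bit of communication every tree in the support is a leaf, so it gives the same
answer on both inputs. -/
theorem one_le_of_computes {P : RandProt X Y Z} {F : CFn X Y Z} (hP : P.Computes F (1 / 3))
    {T : ℝ} (hT : P.WCostLe T) {x x' : X} {y y' : Y} {z z' : Z} (h : F x y = some z)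
    (h' : F x' y' = some z') (hne : z ≠ z') : 1 ≤ T := by
  by_contra! hT1
  have hsum : P.succProb x y z + P.succProb x' y' z' ≤ 1 := by
    rw [← P.sum_one, succProb, succProb, ← sum_add_distrib]
    refine sum_le_sum fun ω _ => ?_
    rcases eq_or_ne (P.p ω) 0 with hω | hω
    · simp [hω]
    have hcost : (P.prot ω).cost x y = 0 := by
      have := (hT ω hω x y).trans_lt hT1
      exact Nat.lt_one_iff.1 (by exact_mod_cast this)
    have hleaf := Prot.run_eq_run_of_cost_eq_zero hcost x' y'
    split_ifs with h₁ h₂ <;> simp_all [P.nonneg ω]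
  linarith [hP x y z h, hP x' y' z' h']

theorem wprob_run_ne_le {P : RandProt X Y Z} {F : CFn X Y Z} {ε : ℝ} (hP : P.Computes F ε)
    {x : X} {y : Y} {z : Z} (h : F x y = some z) :
    wprob P.p (fun ω => (P.prot ω).run x y ≠ z) ≤ ε := by
  have hsplit : wprob P.p (fun ω => (P.prot ω).run x y ≠ z) + P.succProb x y z = 1 := by
    rw [← P.sum_one, wprob, succProb, ← sum_add_distrib]
    refine sum_congr rfl fun ω _ => ?_
    split_ifs <;> simp_all
  linarith [hP x y z h]

end RandProt

theorem R0cc_le {X Y Z : Type} {F : CFn X Y Z} {Q : RandProt X Y Z} (hQ : Q.Computes F 0)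
    {T : ℝ} (hT : 0 ≤ T) (hcost : Q.ECostLe F T) : R0cc F ≤ T :=
  csInf_le ⟨0, fun _ h => h.1⟩ ⟨hT, Q, hQ, hcost⟩

namespace Sab

def fill : Sab → Bool → Bool
  | zero, _ => false
  | one, _ => true
  | _, c => c

def isSpecial : Sab → Bool
  | star => true
  | dagger => true
  | _ => false

theorem isSpecial_iff {s : Sab} : s.isSpecial ↔ s = star ∨ s = dagger := by
  cases s <;> simp [isSpecial]

theorem fill_ofBool (x c : Bool) : (ofBool x).fill c = x := by
  cases x <;> rfl

theorem fill_eq_fill {s : Sab} (hs : ¬(s = star ∨ s = dagger)) (c c' : Bool) :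
    s.fill c = s.fill c' := by
  cases s <;> simp_all [fill]

end Sab

def sabFill {ι : Type} (p : ι → Sab) (c : ι → Bool) : ι → Bool := fun i => (p i).fill (c i)

theorem SabConsistent.sabFill_self {ι : Type} {p : ι → Sab} {u : ι → Bool}
    (hu : SabConsistent p u) : sabFill p u = u := by
  funext i
  rcases hu i with h | h | h <;> simp only [sabFill, h, Sab.fill_ofBool] <;> rfl

theorem IsSabotaged.eq_of_special {ι : Type} {f : PFn ι Bool Bool} {s : Sab} {p : ι → Sab}
    (hs : IsSabotaged f s p) {i : ι} (hi : p i = Sab.star ∨ p i = Sab.dagger) : p i = s := by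
  rcases hs.1 i with h | h | h <;> simp_all

section UniqueSpecial

variable {ι : Type} {p : ι → Sab} {i₀ : ι}

theorem sabFill_congr (hp : ∀ j, (p j = Sab.star ∨ p j = Sab.dagger) ↔ j = i₀)
    {c c' : ι → Bool} (h : c i₀ = c' i₀) : sabFill p c = sabFill p c' := by
  funext j
  by_cases hj : j = i₀
  · subst hj
    simp [sabFill, h]
  · exact Sab.fill_eq_fill (mt (hp j).1 hj) _ _

/-- The two inputs witnessing the sabotage are exactly the two fillings of `p`. -/
theorem IsSabotaged.exists_sabFill_eq (hp : ∀ j, (p j = Sab.star ∨ p j = Sab.dagger) ↔ j = i₀)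
    {f : PFn ι Bool Bool} {s : Sab} (hs : IsSabotaged f s p) :
    ∃ z₀ : Bool, ∀ c, f (sabFill p c) = some (z₀ ^^ c i₀) := by
  obtain ⟨-, x, y, hx, hy, hne, hcx, hcy⟩ := hs
  obtain ⟨zx, hzx⟩ := Option.isSome_iff_exists.1 hx
  obtain ⟨zy, hzy⟩ := Option.isSome_iff_exists.1 hy
  have hxy : y i₀ = !x i₀ := by
    refine Bool.eq_not.2 fun h => hne ?_
    rw [← hcx.sabFill_self, ← hcy.sabFill_self, sabFill_congr hp h]
  have hz : zy = !zx := Bool.eq_not.2 fun h => hne (by rw [hzx, hzy, h])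
  refine ⟨zx ^^ x i₀, fun c => ?_⟩
  by_cases hc : c i₀ = x i₀
  · rw [sabFill_congr hp hc, hcx.sabFill_self, hzx, hc]
    simp
  · have hc' : c i₀ = y i₀ := by rw [hxy]; exact Bool.eq_not.2 hc
    rw [sabFill_congr hp hc', hcy.sabFill_self, hzy, hc', hxy, hz]
    simp

end UniqueSpecial

theorem fusab_eq_some {ι : Type} {f : PFn ι Bool Bool} {p : ι → Sab} {z : Bool}
    (h : fusab f p = some z) :
    ∃ i₀, (∀ j, (p j = Sab.star ∨ p j = Sab.dagger) ↔ j = i₀) ∧ z = decide (p i₀ = Sab.dagger) ∧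
      ∃ z₀ : Bool, ∀ c, f (sabFill p c) = some (z₀ ^^ c i₀) := by
  unfold fusab fsab at h
  split_ifs at h with huniq hstar hdagger <;> cases h
  all_goals
    obtain ⟨i₀, hi₀, hu⟩ := huniq
    have hp : ∀ j, (p j = Sab.star ∨ p j = Sab.dagger) ↔ j = i₀ :=
      fun j => ⟨hu j, fun h => h ▸ hi₀⟩
  · exact ⟨i₀, hp, by simp [hstar.eq_of_special hi₀], hstar.exists_sabFill_eq hp⟩
  · exact ⟨i₀, hp, by simp [hdagger.eq_of_special hi₀], hdagger.exists_sabFill_eq hp⟩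

theorem binval_testBit {d i : ℕ} (h : i < 2 ^ d) : binval (fun j : Fin d => i.testBit j) = i := by
  have := congrArg Fin.val ((finFunctionFinEquiv (m := 2) (n := d)).apply_symm_apply ⟨i, h⟩)
  rw [finFunctionFinEquiv_apply] at this
  refine Eq.trans (sum_congr rfl fun j _ => ?_) this
  rw [finFunctionFinEquiv_symm_apply_val]
  simp only [Nat.testBit_eq_decide_div_mod_eq]
  rcases Nat.mod_two_eq_zero_or_one (i / 2 ^ (j : ℕ)) with h | h <;> simp [h]

abbrev Ptrs (n b : ℕ) : Type := Fin n → Fin b → Bool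

abbrev Arrays (n b : ℕ) (σ : Type) : Type := Fin n → Fin (2 ^ b) → σ

section Simulation

variable {n b d k M : ℕ}

def gadgetInput (x : Ptrs n b) (y : Arrays n b Sab) : Fin n → Sab := fun i => IndG b Sab (x i) (y i)

def fillArrays (c : Fin n → Bool) (y : Arrays n b Sab) : Arrays n b Bool :=
  fun i j => (y i j).fill (c i)

theorem gcomp_fillArrays (f : PFn (Fin n) Bool Bool) (c : Fin n → Bool) (x : Ptrs n b)
    (y : Arrays n b Sab) :
    gcomp f (IndG b Bool) x (fillArrays c y) = f (sabFill (gadgetInput x y) c) := rfl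

def probe (d : ℕ) : Fin (d + 1) → Fin n → Bool :=
  Fin.cons (fun _ => false) fun j i => (i : ℕ).testBit j

def decode {d : ℕ} (a : Fin (d + 1) → Bool) : ℕ := binval fun j : Fin d => a j.succ ^^ a 0

theorem decode_probe {d : ℕ} (i₀ : Fin n) (h : (i₀ : ℕ) < 2 ^ d) (z₀ : Bool) :
    decode (fun q => z₀ ^^ probe d q i₀) = i₀ := by
  unfold decode
  convert binval_testBit h using 2 with j
  cases z₀ <;> simp [probe]

def Prot.ofFun {Y : Type} (F : Ptrs n b → Y → Bool) : Prot (Ptrs n b) Y Bool :=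
  (Prot.pi fun i => Prot.sendA fun x : Ptrs n b => x i).bind fun x => Prot.sendB (F x)

@[simp] theorem Prot.run_ofFun {Y : Type} (F : Ptrs n b → Y → Bool) (x : Ptrs n b) (y : Y) :
    (Prot.ofFun F).run x y = F x y := by
  simp [Prot.ofFun]

@[simp] theorem Prot.cost_ofFun {Y : Type} (F : Ptrs n b → Y → Bool) (x : Ptrs n b) (y : Y) :
    (Prot.ofFun F).cost x y = n * b + 1 := by
  simp [Prot.ofFun]

def verify (c : ℕ) (fail : Prot (Ptrs n b) (Arrays n b Sab) Bool) :
    Prot (Ptrs n b) (Arrays n b Sab) Bool :=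
  if h : c < n then
    (Prot.sendA fun x : Ptrs n b => x ⟨c, h⟩).bind fun ptr =>
      (Prot.sendB fun y : Arrays n b Sab => (IndG b Sab ptr (y ⟨c, h⟩)).isSpecial).bind fun ok =>
        bif ok then Prot.sendB fun y => decide (IndG b Sab ptr (y ⟨c, h⟩) = Sab.dagger) else fail
  else fail

variable {f : PFn (Fin n) Bool Bool} {P : RandProt (Ptrs n b) (Arrays n b Bool) Bool}
  {x : Ptrs n b} {y : Arrays n b Sab} {z : Bool} {fail : Prot (Ptrs n b) (Arrays n b Sab) Bool}

theorem run_verify (hz : gcomp (fusab f) (IndG b Sab) x y = some z) (hfail : fail.run x y = z)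
    (c : ℕ) : (verify c fail).run x y = z := by
  obtain ⟨i₀, hp, rfl, -⟩ := fusab_eq_some hz
  unfold verify
  split_ifs with hc
  · cases hs : (IndG b Sab (x ⟨c, hc⟩) (y ⟨c, hc⟩)).isSpecial
    · simpa [hs] using hfail
    · obtain rfl := (hp _).1 (Sab.isSpecial_iff.1 hs)
      simp [hs]
  · exact hfail

theorem cost_verify_le (c : ℕ) : (verify c fail).cost x y ≤ b + 2 + fail.cost x y := by
  unfold verify
  split_ifs with hc
  · cases hs : (IndG b Sab (x ⟨c, hc⟩) (y ⟨c, hc⟩)).isSpecial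
    · simp [hs]
      omega
    · simp [hs]
  · omega

theorem cost_verify_le_of_isSpecial {c : ℕ} (hc : c < n)
    (hs : (gadgetInput x y ⟨c, hc⟩).isSpecial) : (verify c fail).cost x y ≤ b + 2 := by
  simp only [gadgetInput] at hs
  simp [verify, hc, hs]

def candidate (t : Fin (d + 1) → Fin k → Prot (Ptrs n b) (Arrays n b Bool) Bool)
    (x : Ptrs n b) (y : Arrays n b Sab) : ℕ :=
  decode fun q => majority fun i => (t q i).run x (fillArrays (probe d q) y)

def attempt (t : Fin (d + 1) → Fin k → Prot (Ptrs n b) (Arrays n b Bool) Bool)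
    (fail : Prot (Ptrs n b) (Arrays n b Sab) Bool) : Prot (Ptrs n b) (Arrays n b Sab) Bool :=
  (Prot.pi fun q => Prot.pi fun i => (t q i).comapY (fillArrays (probe d q))).bind fun a =>
    verify (decode fun q => majority (a q)) fail

theorem run_attempt (t : Fin (d + 1) → Fin k → Prot (Ptrs n b) (Arrays n b Bool) Bool) :
    (attempt t fail).run x y = (verify (candidate t x y) fail).run x y := by
  simp [attempt, candidate]

theorem cost_attempt_le {t : Fin (d + 1) → Fin k → Prot (Ptrs n b) (Arrays n b Bool) Bool}
    {T : ℝ} (hT : ∀ q i y', ((t q i).cost x y' : ℝ) ≤ T) {i₀ : Fin n}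
    (hs : (gadgetInput x y i₀).isSpecial) :
    ((attempt t fail).cost x y : ℝ) ≤
      (d + 1) * k * T + b + 2 + if candidate t x y = i₀ then 0 else (fail.cost x y : ℝ) := by
  have hprobes : (∑ q, ∑ i, ((t q i).cost x (fillArrays (probe d q) y) : ℝ)) ≤ (d + 1) * k * T :=
    (sum_le_sum fun q _ => sum_le_sum fun i _ => hT q i _).trans_eq (by simp [mul_assoc])
  have hverify : ((verify (candidate t x y) fail).cost x y : ℝ) ≤
      b + 2 + if candidate t x y = i₀ then 0 else (fail.cost x y : ℝ) := by
    split_ifs with hc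
    · have := cost_verify_le_of_isSpecial (fail := fail) (hc ▸ i₀.isLt) (by simpa [hc] using hs)
      exact_mod_cast this
    · exact_mod_cast cost_verify_le (fail := fail) _
  have hcost : (attempt t fail).cost x y = ∑ q, ∑ i, (t q i).cost x (fillArrays (probe d q) y) +
      (verify (candidate t x y) fail).cost x y := by
    simp [attempt, candidate]
  rw [hcost]
  push_cast
  linarith

noncomputable def restartChain (f : PFn (Fin n) Bool Bool)
    (ts : List (Fin (d + 1) → Fin k → Prot (Ptrs n b) (Arrays n b Bool) Bool)) :
    Prot (Ptrs n b) (Arrays n b Sab) Bool :=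
  ts.foldr attempt (Prot.ofFun fun x y => (gcomp (fusab f) (IndG b Sab) x y).getD false)

theorem run_restartChain (hz : gcomp (fusab f) (IndG b Sab) x y = some z)
    (ts : List (Fin (d + 1) → Fin k → Prot (Ptrs n b) (Arrays n b Bool) Bool)) :
    (restartChain f ts).run x y = z := by
  induction ts with
  | nil => simp [restartChain, hz]
  | cons t ts ih =>
    rw [restartChain, List.foldr_cons, run_attempt]
    exact run_verify hz ih _

theorem wprob_candidate_ne_le (hP : P.Computes (gcomp f (IndG b Bool)) (1 / 3)) {i₀ : Fin n}
    (hi₀ : (i₀ : ℕ) < 2 ^ d) {z₀ : Bool}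
    (hz₀ : ∀ c, f (sabFill (gadgetInput x y) c) = some (z₀ ^^ c i₀)) (r : ℕ) :
    wprob (piWeight (piWeight P.p))
        (fun ρ : Fin (d + 1) → Fin (2 * r) → P.Ω =>
          candidate (fun q i => P.prot (ρ q i)) x y ≠ i₀) ≤
      (d + 1) * (8 / 9) ^ r := by
  set wrong : Fin (d + 1) → P.Ω → Prop := fun q ω =>
    (P.prot ω).run x (fillArrays (probe d q) y) ≠ (z₀ ^^ probe d q i₀)
  have hwrong (q) : wprob P.p (wrong q) ≤ 1 / 3 :=
    P.wprob_run_ne_le hP (by rw [gcomp_fillArrays, hz₀])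
  calc _ ≤ wprob (piWeight (piWeight P.p))
          (fun ρ : Fin (d + 1) → Fin (2 * r) → P.Ω => ∃ q, r ≤ #{i | wrong q (ρ q i)}) := by
        refine P.isDistrib.pi.pi.wprob_mono fun ρ hρ => ?_
        by_contra! hcorrect
        refine hρ (Eq.trans ?_ (decode_probe i₀ hi₀ z₀))
        exact congrArg decode (funext fun q => by_contra fun h =>
          (le_card_ne_of_majority_ne h).not_gt (hcorrect q))
    _ ≤ ∑ q, wprob (piWeight P.p) (fun ρ : Fin (2 * r) → P.Ω => r ≤ #{i | wrong q (ρ i)}) :=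
        P.isDistrib.pi.wprob_exists_le fun q (ρ : Fin (2 * r) → P.Ω) => r ≤ #{i | wrong q (ρ i)}
    _ ≤ ∑ _q : Fin (d + 1), (1 + 1 / 3) ^ (2 * r) / 2 ^ r := by
        refine sum_le_sum fun q _ => (P.isDistrib.wprob_le_card_filter (wrong q) r).trans ?_
        rw [Fintype.card_fin]
        gcongr
        · linarith [P.isDistrib.wprob_nonneg (wrong q)]
        · exact hwrong q
    _ = (d + 1) * (8 / 9) ^ r := by
        rw [pow_mul, ← div_pow]
        norm_num

theorem succ_mul_pow_le_half (m : ℕ) :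
    (m + 1 : ℝ) * (8 / 9) ^ (9 * (Nat.clog 2 (m + 1) + 1)) ≤ 1 / 2 := by
  set c := Nat.clog 2 (m + 1)
  have hm : (m + 1 : ℝ) ≤ 2 ^ c := by exact_mod_cast Nat.le_pow_clog one_lt_two (m + 1)
  calc (m + 1 : ℝ) * (8 / 9) ^ (9 * (c + 1)) ≤ 2 ^ c * (1 / 2) ^ (c + 1) := by
        rw [pow_mul]
        gcongr
        norm_num
    _ = 1 / 2 := by
        rw [pow_succ, ← mul_assoc, ← mul_pow]
        norm_num

/-- Each probe is a majority vote over `2 * amplification n` runs; as `(8/9)^9 < 1/2`, all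
`⌈log₂ n⌉ + 1` probes are then correct with probability at least `1/2`. -/
def amplification (n : ℕ) : ℕ := 9 * (Nat.clog 2 (Nat.clog 2 n + 1) + 1)

noncomputable def sabotageProt (f : PFn (Fin n) Bool Bool)
    (P : RandProt (Ptrs n b) (Arrays n b Bool) Bool) (d k M : ℕ) :
    RandProt (Ptrs n b) (Arrays n b Sab) Bool where
  Ω := Fin M → Fin (d + 1) → Fin k → P.Ω
  p := piWeight (piWeight (piWeight P.p))
  nonneg := P.isDistrib.pi.pi.pi.nonneg
  sum_one := P.isDistrib.pi.pi.pi.sum_eq_one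
  prot σ := restartChain f ((List.ofFn σ).map fun ρ q i => P.prot (ρ q i))

theorem sabotageProt_computes :
    (sabotageProt f P d k M).Computes (gcomp (fusab f) (IndG b Sab)) 0 := by
  intro x y z hz
  simp only [RandProt.succProb, sabotageProt, run_restartChain hz, if_true, sub_zero]
  exact P.isDistrib.pi.pi.pi.sum_eq_one.ge

theorem sabotageProt_expCost_le (hP : P.Computes (gcomp f (IndG b Bool)) (1 / 3)) {T : ℝ}
    (hT : P.WCostLe T) (hT0 : 0 ≤ T) (hz : gcomp (fusab f) (IndG b Sab) x y = some z) :
    (sabotageProt f P (Nat.clog 2 n) (2 * amplification n) (n * b + 1)).expCost x y ≤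
      2 * ((Nat.clog 2 n + 1) * (2 * amplification n) * T + b + 2) + 1 := by
  obtain ⟨i₀, hp, -, z₀, hz₀⟩ := fusab_eq_some hz
  set d := Nat.clog 2 n
  set k := 2 * amplification n
  set A : ℝ := (d + 1) * k * T + b + 2
  set cost : List (Fin (d + 1) → Fin k → P.Ω) → ℝ :=
    fun l => ((restartChain f (l.map fun ρ q i => P.prot (ρ q i))).cost x y : ℝ)
  have hi₀ : (i₀ : ℕ) < 2 ^ d := i₀.isLt.trans_le (Nat.le_pow_clog one_lt_two n)
  have hfail : wprob (piWeight (piWeight P.p))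
      (fun ρ : Fin (d + 1) → Fin k → P.Ω => candidate (fun q i => P.prot (ρ q i)) x y ≠ i₀) ≤
        1 / 2 :=
    (wprob_candidate_ne_le hP hi₀ hz₀ _).trans (by exact_mod_cast succ_mul_pow_le_half d)
  have hcons (ρ : Fin (d + 1) → Fin k → P.Ω) (hρ : piWeight (piWeight P.p) ρ ≠ 0)
      (l : List (Fin (d + 1) → Fin k → P.Ω)) :
      cost (ρ :: l) ≤ A + if candidate (fun q i => P.prot (ρ q i)) x y ≠ i₀ then cost l else 0 := by
    have hsupp (q i) : P.p (ρ q i) ≠ 0 := by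
      simp only [piWeight, prod_ne_zero_iff, mem_univ, forall_const] at hρ
      exact hρ q i
    rw [ite_not]
    exact cost_attempt_le (fun q i y' => hT _ (hsupp q i) x y')
      (Sab.isSpecial_iff.2 ((hp i₀).2 rfl))
  have hrestart := P.isDistrib.pi.pi.sum_piWeight_mul_le_of_restart hfail (by norm_num)
    (cost := cost) (fun _ => Nat.cast_nonneg _) (A := A) (by positivity)
    (B := n * b + 1) (by simp [cost, restartChain]) hcons (n * b + 1)
  have htail : (1 / 2 : ℝ) ^ (n * b + 1) * (n * b + 1) ≤ 1 := by
    rw [one_div_pow, div_mul_eq_mul_div, one_mul, div_le_one (by positivity)]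
    exact_mod_cast (Nat.lt_two_pow_self).le
  calc (sabotageProt f P d k (n * b + 1)).expCost x y
      = ∑ σ : Fin (n * b + 1) → Fin (d + 1) → Fin k → P.Ω,
          piWeight (piWeight (piWeight P.p)) σ * cost (List.ofFn σ) := rfl
    _ ≤ A / (1 - 1 / 2) + (1 / 2) ^ (n * b + 1) * (n * b + 1) := hrestart
    _ ≤ 2 * A + 1 := by linarith [show A / (1 - 1 / 2) = 2 * A by ring]
    _ = _ := by simp [A, k]

theorem Rcc_set_nonempty (f : PFn (Fin n) Bool Bool) :
    {T : ℝ | 0 ≤ T ∧ ∃ P : RandProt (Ptrs n b) (Arrays n b Bool) Bool,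
      P.Computes (gcomp f (IndG b Bool)) (1 / 3) ∧ P.WCostLe T}.Nonempty := by
  refine ⟨n * b + 1, by positivity,
    RandProt.pure (Prot.ofFun fun x y => (gcomp f (IndG b Bool) x y).getD false), ?_, ?_⟩
  · intro x y z hz
    rw [RandProt.succProb_pure (by simp [hz])]
    norm_num
  · intro _ _ x y
    simp [RandProt.pure]

theorem R0cc_fusab_le (hP : P.Computes (gcomp f (IndG b Bool)) (1 / 3)) {T : ℝ}
    (hT : P.WCostLe T) (hT0 : 0 ≤ T) :
    R0cc (gcomp (fusab f) (IndG b Sab)) ≤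
      2 * ((Nat.clog 2 n + 1) * (2 * amplification n) * T + b + 2) + 1 :=
  R0cc_le sabotageProt_computes (by positivity) fun x y hz =>
    sabotageProt_expCost_le hP hT hT0 (Option.get_mem hz)

/-- Two fillings of one sabotaged input are a `0`-input and a `1`-input of `f ∘ G_b`. -/
theorem R0cc_fusab_eq_zero_or_one_le (hP : P.Computes (gcomp f (IndG b Bool)) (1 / 3))
    {T : ℝ} (hT : P.WCostLe T) :
    R0cc (gcomp (fusab f) (IndG b Sab)) = 0 ∨ 1 ≤ T := by
  by_cases hdom : ∃ x y z, gcomp (fusab f) (IndG b Sab) x y = some z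
  · obtain ⟨x, y, z, hz⟩ := hdom
    obtain ⟨i₀, -, -, z₀, hz₀⟩ := fusab_eq_some hz
    have hfill (c : Bool) :
        gcomp f (IndG b Bool) x (fillArrays (fun _ => c) y) = some (z₀ ^^ c) :=
      (gcomp_fillArrays f _ x y).trans (hz₀ _)
    exact .inr (P.one_le_of_computes hP hT (hfill false) (hfill true) (by simp))
  · simp only [not_exists] at hdom
    refine .inl (le_antisymm ?_ (Real.sInf_nonneg fun _ h => h.1))
    exact R0cc_le (Q := RandProt.pure (Prot.leaf false)) (fun x y z hz => absurd hz (hdom x y z))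
      le_rfl fun x y hz => absurd (Option.get_mem hz) (hdom x y _)

end Simulation

section Estimates

open Real

theorem clog_two_le (m : ℕ) : (Nat.clog 2 m : ℝ) ≤ 2 * log m + 1 := by
  rcases le_or_gt m 1 with hm | hm
  · interval_cases m <;> simp
  have hpos : 0 < Nat.clog 2 m := Nat.clog_pos one_lt_two hm
  have hlt : (2 : ℝ) ^ (Nat.clog 2 m - 1) < m := by
    exact_mod_cast Nat.pow_pred_clog_lt_self one_lt_two hm
  have hlog : ((Nat.clog 2 m - 1 : ℕ) : ℝ) * log 2 < log m := by
    rw [← Real.log_pow]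
    exact Real.log_lt_log (by positivity) hlt
  have h2 : (1 / 2 : ℝ) < log 2 := by linarith [Real.log_two_gt_d9]
  have hm0 : 0 ≤ log m := Real.log_nonneg (by exact_mod_cast hm.le)
  rw [Nat.cast_sub hpos, Nat.cast_one] at hlog
  nlinarith

theorem one_lt_log_of_three_le {x : ℝ} (hx : 3 ≤ x) : 1 < log x := by
  rw [Real.lt_log_iff_exp_lt (by linarith)]
  linarith [Real.exp_one_lt_d9]

theorem log_mul_log_log_nonpos {n : ℕ} (hn : n < 3) : log n * log (log n) ≤ 0 := by
  interval_cases n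
  · simp
  · simp
  · have h0 : 0 < log 2 := Real.log_pos one_lt_two
    have h1 : log 2 < 1 := by linarith [Real.log_two_lt_d9]
    exact mul_nonpos_of_nonneg_of_nonpos h0.le (Real.log_nonpos h0.le h1.le)

theorem log_mul_log_log_pos {n : ℕ} (hn : 3 ≤ n) : 0 < log n * log (log n) := by
  have h := one_lt_log_of_three_le (x := n) (by exact_mod_cast hn)
  exact mul_pos (by linarith) (Real.log_pos h)

theorem exists_simulation_cost_le (C : ℝ) (hC : 0 < C) :
    ∃ K > 0, ∀ (n b : ℕ) (T : ℝ), 3 ≤ n → (b : ℝ) ≤ C * log n → 1 ≤ T →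
      2 * ((Nat.clog 2 n + 1) * (2 * amplification n) * T + b + 2) + 1 ≤
        K * T * (log n * log (log n)) := by
  have hη : 0 < log (log 3) := Real.log_pos (one_lt_log_of_three_le le_rfl)
  refine ⟨288 + (693 + 2 * C) / log (log 3), by positivity, fun n b T hn hb hT => ?_⟩
  set ℓ := log n
  have hℓ3 : log 3 ≤ ℓ := Real.log_le_log (by norm_num) (by exact_mod_cast hn)
  have hℓ1 : 1 ≤ ℓ := (one_lt_log_of_three_le le_rfl).le.trans hℓ3
  have hη' : log (log 3) ≤ log ℓ :=
    Real.log_le_log (by linarith [one_lt_log_of_three_le le_rfl]) hℓ3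
  set M := ℓ * log ℓ / log (log 3)
  have hM : ℓ ≤ M := by
    rw [le_div_iff₀ hη]
    exact mul_le_mul_of_nonneg_left hη' (by linarith)
  have hd : (Nat.clog 2 n + 1 : ℝ) ≤ 4 * ℓ := by linarith [clog_two_le n]
  have hamp : (amplification n : ℝ) ≤ 18 * log ℓ + 43 := by
    have hlog : log ((Nat.clog 2 n + 1 : ℕ) : ℝ) ≤ log 4 + log ℓ := by
      rw [← Real.log_mul (by norm_num) (by positivity)]
      exact Real.log_le_log (by positivity) (by push_cast; linarith)
    have h4 : log 4 < 1.3863 := by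
      rw [show (4 : ℝ) = 2 ^ 2 by norm_num, Real.log_pow]
      push_cast
      linarith [Real.log_two_lt_d9]
    have := clog_two_le (Nat.clog 2 n + 1)
    simp only [amplification]
    push_cast
    linarith
  have hprod : (Nat.clog 2 n + 1 : ℝ) * (2 * amplification n) * T ≤
      4 * ℓ * (2 * (18 * log ℓ + 43)) * T := by
    gcongr
  calc 2 * ((Nat.clog 2 n + 1 : ℝ) * (2 * amplification n) * T + b + 2) + 1
      ≤ 288 * T * (ℓ * log ℓ) + 688 * T * ℓ + 2 * C * ℓ + 5 := by nlinarith
    _ ≤ 288 * T * (ℓ * log ℓ) + (693 + 2 * C) * T * M := by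
        have hTℓ : T * ℓ ≤ T * M := mul_le_mul_of_nonneg_left hM (by linarith)
        have hℓM : ℓ ≤ T * M := hM.trans (le_mul_of_one_le_left (by linarith) hT)
        have hCℓ : C * ℓ ≤ C * (T * M) := mul_le_mul_of_nonneg_left hℓM hC.le
        nlinarith
    _ = (288 + (693 + 2 * C) / log (log 3)) * T * (ℓ * log ℓ) := by
        simp only [M]
        field_simp

end Estimates

/-- **Bounded-error communication lower bound via the sabotaged problem.** For every
`b = O(log n)` (i.e., for every constant `C > 0` there is `c > 0` such that whenever
`b ≤ C log n`), every `n`-bit partial Boolean function `f` satisfies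
`R^cc(f ∘ G_b) = Ω(R₀^cc(f_usab ∘ G'_b) / (log n · log log n))`, where `G'_b` is the
index gadget whose array alphabet is `{0, 1, *, †}`. -/
theorem communication_sabotage (C : ℝ) (hC : 0 < C) :
    ∃ c : ℝ, 0 < c ∧ ∀ (n b : ℕ) (f : PFn (Fin n) Bool Bool),
      (b : ℝ) ≤ C * Real.log n →
      c * (R0cc (gcomp (fusab f) (IndG b Sab)) /
          (Real.log n * Real.log (Real.log n))) ≤
        Rcc (gcomp f (IndG b Bool)) := by
  obtain ⟨K, hK, hcost⟩ := exists_simulation_cost_le C hC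
  refine ⟨K⁻¹, inv_pos.2 hK, fun n b f hb => ?_⟩
  have hR0 : 0 ≤ R0cc (gcomp (fusab f) (IndG b Sab)) := Real.sInf_nonneg fun _ h => h.1
  rcases lt_or_ge n 3 with hn | hn
  · refine (mul_nonpos_of_nonneg_of_nonpos (inv_nonneg.2 hK.le) ?_).trans
      (Real.sInf_nonneg fun _ h => h.1)
    exact div_nonpos_of_nonneg_of_nonpos hR0 (log_mul_log_log_nonpos hn)
  refine le_csInf (Rcc_set_nonempty f) fun T ⟨hT0, P, hP, hT⟩ => ?_
  rw [inv_mul_le_iff₀ hK, div_le_iff₀ (log_mul_log_log_pos hn)]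
  rcases R0cc_fusab_eq_zero_or_one_le hP hT with h0 | h1
  · rw [h0]
    exact mul_nonneg (mul_nonneg hK.le hT0) (log_mul_log_log_pos hn).le
  · exact (R0cc_fusab_le hP hT hT0).trans (hcost n b T hn hb h1)
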